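/- For a complex number b such that b + j is not a nonpositive integer for every integer 0 ≤ j < n, the derivative of the reciprocal rising factorial with respect to b is d/db [1/(b)_n] = (ψ(b) - ψ(b+n))/(b)_n. -/

import Mathlib

/-!
Since `(1/f)' = -(f'/f)/f`, everything reduces to the logarithmic derivative of `(b)_n`,
which is `∑_{j<n} 1/(b+j)`; iterating `ψ(z+1) = ψ(z) + 1/z` telescopes this sum to
`ψ(b+n) - ψ(b)`.
-/

open Complex Finset

noncomputable def ψ (z : ℂ) : ℂ := deriv Complex.Gamma z / Complex.Gamma z

noncomputable def rf (x : ℂ) (n : ℕ) : ℂ := ∏ j ∈ Finset.range n, (x + j)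

theorem ψ_eq_digamma : ψ = Complex.digamma := rfl

theorem Complex.digamma_add_nat {z : ℂ} {n : ℕ} (hz : ∀ j : ℕ, j < n → ∀ m : ℕ, z + j ≠ -m) :
    digamma (z + n) = digamma z + ∑ j ∈ range n, (z + j)⁻¹ := by
  induction n with
  | zero => simp
  | succ n ih =>
    rw [Nat.cast_succ, ← add_assoc, digamma_apply_add_one _ (hz n n.lt_succ_self),
      ih fun j hj => hz j (hj.trans n.lt_succ_self), sum_range_succ, add_assoc]

theorem DifferentiableAt.hasDerivAt_inv_logDeriv {𝕜 : Type*} [NontriviallyNormedField 𝕜]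
    {f : 𝕜 → 𝕜} {x : 𝕜} (hf : DifferentiableAt 𝕜 f x) (hx : f x ≠ 0) :
    HasDerivAt (fun y => (f y)⁻¹) (-logDeriv f x / f x) x := by
  refine (hf.hasDerivAt.inv hx).congr_deriv ?_
  rw [logDeriv_apply]
  field_simp

theorem differentiable_rf (n : ℕ) : Differentiable ℂ (rf · n) := by
  unfold rf
  fun_prop

theorem rf_ne_zero {x : ℂ} {n : ℕ} (hx : ∀ j : ℕ, j < n → x + j ≠ 0) : rf x n ≠ 0 :=
  prod_ne_zero_iff.mpr fun j hj => hx j (mem_range.mp hj)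

theorem logDeriv_rf {x : ℂ} {n : ℕ} (hx : ∀ j : ℕ, j < n → x + j ≠ 0) :
    logDeriv (rf · n) x = ∑ j ∈ range n, (x + j)⁻¹ := by
  unfold rf
  rw [logDeriv_prod (fun j hj => hx j (mem_range.mp hj)) (fun j _ => by fun_prop)]
  refine sum_congr rfl fun j _ => ?_
  rw [logDeriv_apply, deriv_add_const, deriv_id'', one_div]

theorem stmt3 (n : ℕ) (b : ℂ) (hb : ∀ j : ℕ, j < n → ∀ m : ℕ, b + j ≠ -m) :
    HasDerivAt (fun x : ℂ => (rf x n)⁻¹) ((ψ b - ψ (b + n)) / rf b n) b := by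
  have hb0 : ∀ j : ℕ, j < n → b + j ≠ 0 := fun j hj => by simpa using hb j hj 0
  refine ((differentiable_rf n b).hasDerivAt_inv_logDeriv (rf_ne_zero hb0)).congr_deriv ?_
  rw [logDeriv_rf hb0, ψ_eq_digamma, Complex.digamma_add_nat hb]
  ring
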